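/- arXiv:2206.00651 — 3 statements merged into one kernel-verified Lean document; each statement's English description precedes it below -/
import Mathlib

section
/- For functors F, G : C → D and H : D → B between small categories, the homotopic distance satisfies cD(H ∘ F, H ∘ G) ≤ cD(F, G). -/
open CategoryTheory

universe v₁ v₂ v₃ u₁ u₂ u₃

/-- A subcategory of `C`: a set of objects and sets of arrows closed under identities and
composition, whose arrows have source and target in the subcategory. -/
structure Subcat (C : Type u₁) [Category.{v₁} C] where
  objs : Set C
  homs : ∀ x y : C, Set (x ⟶ y)
  id_mem : ∀ {x : C}, x ∈ objs → 𝟙 x ∈ homs x x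
  comp_mem : ∀ {x y z : C} {f : x ⟶ y} {g : y ⟶ z}, f ∈ homs x y → g ∈ homs y z → f ≫ g ∈ homs x z
  src_mem : ∀ {x y : C} {f : x ⟶ y}, f ∈ homs x y → x ∈ objs
  tgt_mem : ∀ {x y : C} {f : x ⟶ y}, f ∈ homs x y → y ∈ objs

variable {C : Type u₁} [Category.{v₁} C]

/-- The type of objects of a subcategory. -/
def Subcat.Obj (U : Subcat C) : Type u₁ := {x : C // x ∈ U.objs}

instance (U : Subcat C) : Category U.Obj where
  Hom x y := {f : x.1 ⟶ y.1 // f ∈ U.homs x.1 y.1}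
  id x := ⟨𝟙 x.1, U.id_mem x.2⟩
  comp f g := ⟨f.1 ≫ g.1, U.comp_mem f.2 g.2⟩
  id_comp f := Subtype.ext (Category.id_comp f.1)
  comp_id f := Subtype.ext (Category.comp_id f.1)
  assoc f g h := Subtype.ext (Category.assoc f.1 g.1 h.1)

/-- The inclusion functor of a subcategory. -/
def Subcat.incl (U : Subcat C) : U.Obj ⥤ C where
  obj x := x.1
  map f := f.1

/-- A chain of composable arrows lies in the subcategory `U`. -/
def Subcat.ContainsChain (U : Subcat C) {m : ℕ} (c : Fin (m + 1) → C)
    (f : ∀ i : Fin m, c i.castSucc ⟶ c i.succ) : Prop :=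
  (∀ i, c i ∈ U.objs) ∧ ∀ i, f i ∈ U.homs (c i.castSucc) (c i.succ)

/-- A family of subcategories is a geometric cover if every finite chain of composable
arrows lies in some member of the family. -/
def GeometricCover {ι : Type} (U : ι → Subcat C) : Prop :=
  ∀ (m : ℕ) (c : Fin (m + 1) → C) (f : ∀ i : Fin m, c i.castSucc ⟶ c i.succ),
    ∃ i : ι, (U i).ContainsChain c f

/-- Two functors are homotopic if they are connected by a finite zigzag of natural
transformations. -/
def Homotopic {A : Type u₂} {B : Type u₃} [Category.{v₂} A] [Category.{v₃} B]
    (F G : A ⥤ B) : Prop :=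
  Zigzag F G

variable {D : Type u₂} [Category.{v₂} D]

/-- `C` admits a geometric cover by `n + 1` homotopy domains for `F` and `G`. -/
def DistLE (n : ℕ) (F G : C ⥤ D) : Prop :=
  ∃ U : Fin (n + 1) → Subcat C, GeometricCover U ∧
    ∀ i, Homotopic ((U i).incl ⋙ F) ((U i).incl ⋙ G)

/-- The homotopic distance between two functors, as an extended natural number. -/
noncomputable def cD (F G : C ⥤ D) : ℕ∞ :=
  sInf {n : ℕ∞ | ∃ m : ℕ, n = (m : ℕ∞) ∧ DistLE m F G}

theorem Homotopic.comp_right {A : Type u₁} {A' : Type u₂} {B : Type u₃} [Category.{v₁} A]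
    [Category.{v₂} A'] [Category.{v₃} B] {F G : A ⥤ A'} (h : Homotopic F G) (H : A' ⥤ B) :
    Homotopic (F ⋙ H) (G ⋙ H) :=
  zigzag_obj_of_zigzag ((Functor.whiskeringRight A A' B).obj H) h

theorem DistLE.comp_right {B : Type u₃} [Category.{v₃} B] {n : ℕ} {F G : C ⥤ D}
    (h : DistLE n F G) (H : D ⥤ B) : DistLE n (F ⋙ H) (G ⋙ H) :=
  let ⟨U, hcov, hhtp⟩ := h
  ⟨U, hcov, fun i => (hhtp i).comp_right H⟩

/-- The homotopic distance does not increase under postcomposition: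
`cD(H ∘ F, H ∘ G) ≤ cD(F, G)`. -/
theorem cD_postcomp_le {B : Type u₃} [Category.{v₃} B]
    (F G : C ⥤ D) (H : D ⥤ B) :
    cD (F ⋙ H) (G ⋙ H) ≤ cD F G := by
  exact sInf_le_sInf fun _ ⟨m, hm, h⟩ => ⟨m, hm, h.comp_right H⟩
end

section
/- For any two functors F, G : C → D between small categories, the homotopic distance is bounded above by the categorical complexity of the target: cD(F,G) ≤ cTC(D) = cD(p₁, p₂), where p₁, p₂ : D × D → D are the projections. -/
open CategoryTheory

universe v₁ v₂ v₃ u₁ u₂ u₃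

variable {C : Type u₁} [Category.{v₁} C]

variable {D : Type u₂} [Category.{v₂} D]

/-- The categorical complexity of `D` is the homotopic distance between the two
projections `D × D ⥤ D`. -/
noncomputable def cTC (D : Type u₂) [Category.{v₂} D] : ℕ∞ :=
  cD (CategoryTheory.Prod.fst D D) (CategoryTheory.Prod.snd D D)

/-! Pulling a geometric cover of `D × D` back along `F.prod' G : C ⥤ D × D` gives a geometric
cover of `C`, and on each pulled-back piece `F` and `G` are the two projections restricted along
`F.prod' G`, so a zigzag between the projections whiskers to a zigzag between `F` and `G`. -/

namespace Subcat

variable {E : Type u₃} [Category.{v₃} E]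

def comap (H : C ⥤ E) (V : Subcat E) : Subcat C where
  objs := {x | H.obj x ∈ V.objs}
  homs x y := {f | H.map f ∈ V.homs (H.obj x) (H.obj y)}
  id_mem h := by simpa using V.id_mem h
  comp_mem hf hg := by simpa using V.comp_mem hf hg
  src_mem hf := V.src_mem hf
  tgt_mem hf := V.tgt_mem hf

def comapLift (H : C ⥤ E) (V : Subcat E) : (V.comap H).Obj ⥤ V.Obj where
  obj x := ⟨H.obj x.1, x.2⟩
  map f := ⟨H.map f.1, f.2⟩
  map_id x := Subtype.ext (H.map_id x.1)
  map_comp f g := Subtype.ext (H.map_comp f.1 g.1)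

lemma comapLift_comp_incl (H : C ⥤ E) (V : Subcat E) :
    V.comapLift H ⋙ V.incl = (V.comap H).incl ⋙ H :=
  rfl

end Subcat

lemma GeometricCover.comap {E : Type u₃} [Category.{v₃} E] {ι : Type} {U : ι → Subcat E}
    (hU : GeometricCover U) (H : C ⥤ E) : GeometricCover fun i => (U i).comap H :=
  fun m c f => hU m (fun j => H.obj (c j)) fun j => H.map (f j)

lemma Homotopic.whiskerLeft {A : Type u₁} {B : Type u₂} {B' : Type u₃} [Category.{v₁} A]
    [Category.{v₂} B] [Category.{v₃} B'] (K : A ⥤ B) {F G : B ⥤ B'} (h : Homotopic F G) :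
    Homotopic (K ⋙ F) (K ⋙ G) :=
  zigzag_obj_of_zigzag ((Functor.whiskeringLeft A B B').obj K) h

lemma DistLE.precomp {E : Type u₃} [Category.{v₃} E] {n : ℕ} {F G : E ⥤ D}
    (h : DistLE n F G) (H : C ⥤ E) : DistLE n (H ⋙ F) (H ⋙ G) := by
  obtain ⟨U, hcover, hhtpy⟩ := h
  refine ⟨fun i => (U i).comap H, hcover.comap H, fun i => ?_⟩
  have := (hhtpy i).whiskerLeft ((U i).comapLift H)
  rwa [← Functor.assoc, ← Functor.assoc, Subcat.comapLift_comp_incl] at this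

lemma cD_comp_le {E : Type u₃} [Category.{v₃} E] (H : C ⥤ E) (F G : E ⥤ D) :
    cD (H ⋙ F) (H ⋙ G) ≤ cD F G :=
  sInf_le_sInf fun _ ⟨m, hm, h⟩ => ⟨m, hm, h.precomp H⟩

/-- The homotopic distance of any two functors `F, G : C ⥤ D` is bounded above by the
categorical complexity of the target: `cD(F, G) ≤ cTC(D) = cD(p₁, p₂)`. -/
theorem cD_le_cTC (F G : C ⥤ D) : cD F G ≤ cTC D :=
  cD_comp_le (F.prod' G) (CategoryTheory.Prod.fst D D) (CategoryTheory.Prod.snd D D)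
end

section
/- The higher categorical complexity equals the higher homotopic distance of the projections: for any small category C and n ≥ 1, cTC_n(C) = cD(p₁, …, p_n), where p_i : Cⁿ → C are the n projection functors. -/
open CategoryTheory

universe v₁ v₂ v₃ u₁ u₂ u₃

variable {C : Type u₁} [Category.{v₁} C]

variable {D : Type u₂} [Category.{v₂} D]

/-- `C` admits a geometric cover by `m + 1` subcategories on which all the functors in the
family are pairwise homotopic. -/
def HDistLE {ι : Type} (m : ℕ) (F : ι → (C ⥤ D)) : Prop :=
  ∃ U : Fin (m + 1) → Subcat C, GeometricCover U ∧
    ∀ (k : Fin (m + 1)) (i j : ι), Homotopic ((U k).incl ⋙ F i) ((U k).incl ⋙ F j)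

/-- The higher homotopic distance of a family of functors. -/
noncomputable def hcD {ι : Type} (F : ι → (C ⥤ D)) : ℕ∞ :=
  sInf {n : ℕ∞ | ∃ m : ℕ, n = (m : ℕ∞) ∧ HDistLE m F}

/-- The `n`-fold diagonal functor `C ⥤ Cⁿ`. -/
def diagN (C : Type u₁) [Category.{v₁} C] (n : ℕ) : C ⥤ (Fin n → C) :=
  Functor.pi' (fun _ => 𝟭 C)

/-- The higher `n`-th categorical complexity of `C`: the least `m` such that `Cⁿ` admits a
geometric cover by `m + 1` higher `n`-Farber subcategories, i.e. subcategories `Ω` with a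
functor `F : Ω ⥤ C` such that `Δₙ ∘ F` is homotopic to the inclusion of `Ω`. -/
noncomputable def cTCn (C : Type u₁) [Category.{v₁} C] (n : ℕ) : ℕ∞ :=
  sInf {N : ℕ∞ | ∃ m : ℕ, N = (m : ℕ∞) ∧
    ∃ U : Fin (m + 1) → Subcat (Fin n → C), GeometricCover U ∧
      ∀ k, ∃ F : (U k).Obj ⥤ C, Homotopic (F ⋙ diagN C n) ((U k).incl)}

/-! A functor `F` with `Δₙ ∘ F ≃ ι` exists on a subcategory `ι : Ω ↪ Cⁿ` exactly when the
projections `pᵢ ∘ ι` are pairwise homotopic: composing the homotopy with `pᵢ` gives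
`F ≃ pᵢ ∘ ι` since `pᵢ ∘ Δₙ = id`; conversely `F := p₁ ∘ ι` works, because zigzags in a finite
product of categories can be assembled coordinate by coordinate (change one factor at a time).
So the covers counted by `cTCₙ` and by `cD(p₁, …, pₙ)` are the same covers. -/

namespace CategoryTheory

universe v u

lemma Zigzag.prod {J K : Type*} [Category J] [Category K] {j j' : J} {k k' : K}
    (hj : Zigzag j j') (hk : Zigzag k k') : Zigzag (j, k) (j', k') :=
  (zigzag_obj_of_zigzag (Prod.sectL J k) hj).trans (zigzag_obj_of_zigzag (Prod.sectR j' K) hk)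

lemma Equivalence.zigzag_functor_obj_iff {J K : Type*} [Category J] [Category K] (e : J ≌ K)
    {x y : J} : Zigzag (e.functor.obj x) (e.functor.obj y) ↔ Zigzag x y :=
  ⟨fun h => (Zigzag.of_hom (e.unitIso.hom.app x)).trans <|
      (zigzag_obj_of_zigzag e.inverse h).trans (Zigzag.of_inv (e.unitIso.hom.app y)),
    zigzag_obj_of_zigzag e.functor⟩

lemma Pi.zigzag_iff {I : Type*} [Finite I] {J : I → Type u} [∀ i, Category.{v} (J i)]
    {x y : ∀ i, J i} : Zigzag x y ↔ ∀ i, Zigzag (x i) (y i) := by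
  refine ⟨fun h i => zigzag_obj_of_zigzag (Pi.eval J i) h, fun h => ?_⟩
  induction I using Finite.induction_empty_option with
  | of_equiv e hα =>
    exact ((Pi.equivalenceOfEquiv J e).symm.zigzag_functor_obj_iff).mp (hα fun a => h (e a))
  | h_empty => rw [Subsingleton.elim x y]
  | h_option hα =>
    exact ((Pi.optionEquivalence J).zigzag_functor_obj_iff).mp
      ((h none).prod (hα fun a => h (some a)))

lemma Functor.zigzag_of_forall_comp_eval {I : Type*} [Finite I] {A : Type*} [Category A]
    {J : I → Type u} [∀ i, Category.{v} (J i)] {F G : A ⥤ ∀ i, J i}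
    (h : ∀ i, Zigzag (F ⋙ Pi.eval J i) (G ⋙ Pi.eval J i)) : Zigzag F G :=
  zigzag_obj_of_zigzag
    { obj := Functor.pi', map := fun α => NatTrans.pi' α : (∀ i, A ⥤ J i) ⥤ (A ⥤ ∀ i, J i) }
    (Pi.zigzag_iff.mpr h)

end CategoryTheory

open CategoryTheory

lemma exists_homotopic_comp_diag_iff {I : Type*} [Finite I] [Nonempty I] {A : Type*}
    [Category A] {H : A ⥤ (I → C)} :
    (∃ F : A ⥤ C, Homotopic (F ⋙ Functor.pi' fun _ : I => 𝟭 C) H) ↔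
      ∀ i j, Homotopic (H ⋙ Pi.eval _ i) (H ⋙ Pi.eval _ j) := by
  constructor
  · rintro ⟨F, hF⟩ i j
    have hproj (i : I) : Homotopic F (H ⋙ Pi.eval _ i) :=
      zigzag_obj_of_zigzag ((Functor.whiskeringRight A (I → C) C).obj (Pi.eval _ i)) hF
    exact (hproj i).symm.trans (hproj j)
  · intro h
    obtain ⟨i₀⟩ := ‹Nonempty I›
    exact ⟨H ⋙ Pi.eval _ i₀, Functor.zigzag_of_forall_comp_eval (h i₀)⟩

/-- The higher categorical complexity equals the higher homotopic distance of the
projections `pᵢ : Cⁿ ⥤ C`. -/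
theorem cTCn_eq_hcD (C : Type u₁) [Category.{v₁} C] (n : ℕ) (hn : 1 ≤ n) :
    cTCn C n = hcD (fun i : Fin n => Pi.eval (fun _ : Fin n => C) i) := by
  have : Nonempty (Fin n) := ⟨⟨0, hn⟩⟩
  simp only [cTCn, hcD, HDistLE, diagN, exists_homotopic_comp_diag_iff]
end
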